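/- arXiv:2405.16238 — 2 statements merged into one kernel-verified Lean document; each statement's English description precedes it below -/
import Mathlib

section
/- Let X be a cocompact Hadamard space whose ideal boundary contains a nontrivial closed symmetric subset, with induced submetry δ : ∂_T X → Δ on the Tits boundary, and let σ̂ ⊂ ∂_T X be a top-dimensional round sphere. If σ ⊂ σ̂ is a singular sphere, then σ is a reflecting sphere for the restricted submetry δ|_{σ̂}. -/
open Real Set Filter Metric
open scoped ENNReal

noncomputable section

variable {X : Type*} [MetricSpace X]

/-- `γ` restricted to `[a,b]` is a unit-speed geodesic. -/
def IsGeodesicOn (γ : ℝ → X) (a b : ℝ) : Prop :=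
  ∀ s ∈ Set.Icc a b, ∀ t ∈ Set.Icc a b, dist (γ s) (γ t) = |s - t|

/-- A geodesic from `x` to `y` parametrized by arclength on `[0, dist x y]`. -/
def GeodesicBetween (γ : ℝ → X) (x y : X) : Prop :=
  γ 0 = x ∧ γ (dist x y) = y ∧ IsGeodesicOn γ 0 (dist x y)

/-- A complete geodesic (line). -/
def IsGeodesicLine (c : ℝ → X) : Prop := ∀ s t : ℝ, dist (c s) (c t) = |s - t|

/-- A geodesic ray (unit speed, defined on `[0,∞)`). -/
def IsGeodesicRay (c : ℝ → X) : Prop :=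
  ∀ s t : ℝ, 0 ≤ s → 0 ≤ t → dist (c s) (c t) = |s - t|

/-- A CAT(0) space: geodesic and satisfying the CN (Bruhat–Tits) comparison
inequality. -/
class CAT0 (X : Type*) [MetricSpace X] : Prop where
  geodesic : ∀ x y : X, ∃ γ : ℝ → X, GeodesicBetween γ x y
  cn : ∀ x y z m : X, dist y m = dist y z / 2 → dist z m = dist y z / 2 →
    dist x m ^ 2 ≤ (dist x y ^ 2 + dist x z ^ 2) / 2 - dist y z ^ 2 / 4

/-- Geodesic completeness: every nondegenerate geodesic segment extends to a complete
geodesic. -/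
def GeodesicallyComplete (X : Type*) [MetricSpace X] : Prop :=
  ∀ (γ : ℝ → X) (x y : X), GeodesicBetween γ x y → x ≠ y →
    ∃ c : ℝ → X, IsGeodesicLine c ∧ ∀ t ∈ Set.Icc (0 : ℝ) (dist x y), c t = γ t

/-- A *Hadamard space*: a locally compact, complete, geodesically complete CAT(0)
space. -/
def IsHadamard (X : Type*) [MetricSpace X] : Prop :=
  CAT0 X ∧ LocallyCompactSpace X ∧ CompleteSpace X ∧ GeodesicallyComplete X

/-- `X` has cocompact isometry group. -/
def CocompactIsom (X : Type*) [MetricSpace X] : Prop :=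
  ∃ K : Set X, IsCompact K ∧ ∀ x : X, ∃ g : X ≃ᵢ X, g x ∈ K

/-- The space of geodesic rays of `X`. -/
def Ray (X : Type*) [MetricSpace X] := {c : ℝ → X // IsGeodesicRay c}

/-- Two rays are asymptotic if they are at bounded distance. -/
def asymptotic (c c' : Ray X) : Prop :=
  ∃ K : ℝ, ∀ t : ℝ, 0 ≤ t → dist (c.1 t) (c'.1 t) ≤ K

def raySetoid (X : Type*) [MetricSpace X] : Setoid (Ray X) where
  r := asymptotic
  iseqv := by
    constructor
    · exact fun c => ⟨0, fun t _ => by simp⟩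
    · rintro c c' ⟨K, hK⟩
      exact ⟨K, fun t ht => by rw [dist_comm]; exact hK t ht⟩
    · rintro c c' c'' ⟨K, hK⟩ ⟨K', hK'⟩
      exact ⟨K + K', fun t ht =>
        (dist_triangle _ (c'.1 t) _).trans (add_le_add (hK t ht) (hK' t ht))⟩

/-- The ideal boundary `∂_∞ X`: asymptote classes of geodesic rays. -/
def IdealBoundary (X : Type*) [MetricSpace X] : Type _ := Quotient (raySetoid X)

/-- The ideal point determined by a geodesic ray. -/
def rayClass (c : Ray X) : IdealBoundary X := Quotient.mk (raySetoid X) c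

/-- The forward ray of a complete geodesic. -/
def linePosRay (c : ℝ → X) (h : IsGeodesicLine c) : Ray X :=
  ⟨c, fun s t _ _ => h s t⟩

/-- The backward ray of a complete geodesic. -/
def lineNegRay (c : ℝ → X) (h : IsGeodesicLine c) : Ray X :=
  ⟨fun t => c (-t), fun s t _ _ => by
    have := h (-s) (-t)
    rwa [show (-s) - (-t) = t - s by ring, abs_sub_comm] at this⟩

/-- The Tits angle between two ideal points: the limit of comparison angles between
representing rays issuing from a common basepoint. -/
noncomputable def titsAngle (ξ η : IdealBoundary X) : ℝ :=
  sSup {θ : ℝ | ∃ c c' : Ray X, rayClass c = ξ ∧ rayClass c' = η ∧ c.1 0 = c'.1 0 ∧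
    Tendsto (fun t : ℝ => 2 * Real.arcsin (dist (c.1 t) (c'.1 t) / (2 * t)))
      atTop (nhds θ)}

/-- The length of a chain of ideal points, measured with the Tits angle. -/
noncomputable def chainLength (f : ℕ → IdealBoundary X) (n : ℕ) : ℝ≥0∞ :=
  ∑ i ∈ Finset.range n, ENNReal.ofReal (titsAngle (f i) (f (i + 1)))

/-- The Tits metric on the ideal boundary: the intrinsic (length) metric associated to
the Tits angle, via infima over `ε`-fine chains. -/
noncomputable def titsDist (ξ η : IdealBoundary X) : ℝ≥0∞ :=
  ⨆ (ε : ℝ) (_ : 0 < ε), sInf {L : ℝ≥0∞ | ∃ (n : ℕ) (f : ℕ → IdealBoundary X),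
    f 0 = ξ ∧ f n = η ∧ (∀ i < n, titsAngle (f i) (f (i + 1)) ≤ ε) ∧
    L = chainLength f n}

/-- Two ideal points are antipodal if their Tits distance is at least `π`. -/
def AntipodalB (ξ η : IdealBoundary X) : Prop := ENNReal.ofReal π ≤ titsDist ξ η

/-- Two ideal points are visually antipodal if they are the two endpoints of a complete
geodesic in `X`. -/
def VisuallyAntipodal (ξ η : IdealBoundary X) : Prop :=
  ∃ (c : ℝ → X) (h : IsGeodesicLine c),
    rayClass (linePosRay c h) = ξ ∧ rayClass (lineNegRay c h) = η

/-- A subset of the ideal boundary is symmetric if it contains all antipodes of its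
points. -/
def SymmetricSet (A : Set (IdealBoundary X)) : Prop :=
  ∀ ξ ∈ A, ∀ η, AntipodalB ξ η → η ∈ A

/-- A subset of the ideal boundary is symmetric w.r.t. geodesic lines if every complete
geodesic of `X` has both or neither of its ideal endpoints in it. -/
def LineSymmetricSet (A : Set (IdealBoundary X)) : Prop :=
  ∀ (c : ℝ → X) (h : IsGeodesicLine c),
    (rayClass (linePosRay c h) ∈ A ↔ rayClass (lineNegRay c h) ∈ A)

/-- A subset is visually symmetric if it contains all visual antipodes of its points. -/
def VisuallySymmetricSet (A : Set (IdealBoundary X)) : Prop :=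
  ∀ ξ ∈ A, ∀ η, VisuallyAntipodal ξ η → η ∈ A

/-- Convergence of a sequence of ideal points in the cone topology: representing rays
from a common basepoint converge pointwise. -/
def ConeConvB (ξ : ℕ → IdealBoundary X) (η : IdealBoundary X) : Prop :=
  ∃ (c : ℕ → Ray X) (c' : Ray X), (∀ k, rayClass (c k) = ξ k) ∧ rayClass c' = η ∧
    (∀ k, (c k).1 0 = c'.1 0) ∧
    ∀ t : ℝ, 0 ≤ t → Tendsto (fun k => dist ((c k).1 t) (c'.1 t)) atTop (nhds 0)

/-- Sequential closure in the cone topology. -/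
def coneClosure (A : Set (IdealBoundary X)) : Set (IdealBoundary X) :=
  A ∪ {η | ∃ ξ : ℕ → IdealBoundary X, (∀ k, ξ k ∈ A) ∧ ConeConvB ξ η}

/-- Sequential closedness in the cone topology. -/
def ConeClosed (A : Set (IdealBoundary X)) : Prop :=
  ∀ (ξ : ℕ → IdealBoundary X) (η : IdealBoundary X),
    (∀ k, ξ k ∈ A) → ConeConvB ξ η → η ∈ A

/-- A minimal closed symmetric subset of the ideal boundary. -/
def MinimalClosedSymmetric (B : Set (IdealBoundary X)) : Prop :=
  B.Nonempty ∧ ConeClosed B ∧ SymmetricSet B ∧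
    ∀ B' ⊆ B, B'.Nonempty → ConeClosed B' → SymmetricSet B' → B' = B

/-- Convergence of a sequence of points of `X` to an ideal point in the cone topology:
the distances to a basepoint blow up and the geodesics from the basepoint converge
pointwise to a ray representing the ideal point. -/
def ConeConvPt (o : X) (x : ℕ → X) (η : IdealBoundary X) : Prop :=
  Tendsto (fun k => dist o (x k)) atTop atTop ∧
  ∃ (c : Ray X) (g : ℕ → ℝ → X), c.1 0 = o ∧ rayClass c = η ∧
    (∀ k, GeodesicBetween (g k) o (x k)) ∧
    ∀ t : ℝ, 0 ≤ t → Tendsto (fun k => dist (g k t) (c.1 t)) atTop (nhds 0)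

/-- The image of a ray under an isometry of `X`. -/
def isomRay (g : X ≃ᵢ X) (c : Ray X) : Ray X :=
  ⟨fun t => g (c.1 t), fun s t hs ht => by
    rw [g.dist_eq]; exact c.2 s t hs ht⟩

/-- The induced map of an isometry of `X` on the ideal boundary. -/
def isomBoundary (g : X ≃ᵢ X) : IdealBoundary X → IdealBoundary X :=
  Quotient.map' (isomRay g) (by
    rintro c c' ⟨K, hK⟩
    exact ⟨K, fun t ht => by simpa [isomRay, g.dist_eq] using hK t ht⟩)

/-- A submetry from the Tits boundary to a metric space. -/
def IsTitsSubmetry {Δ : Type*} [MetricSpace Δ] (δ : IdealBoundary X → Δ) : Prop :=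
  Function.Surjective δ ∧ ∀ (ξ : IdealBoundary X) (r : ℝ), 0 ≤ r →
    δ '' {η | titsDist ξ η ≤ ENNReal.ofReal r} = Metric.closedBall (δ ξ) r

open scoped RealInnerProductSpace

/-- Spherical (angular) distance between vectors. -/
noncomputable def sd {m : ℕ} (u v : EuclideanSpace ℝ (Fin m)) : ℝ := Real.arccos ⟪u, v⟫

/-- A subset of the Tits boundary is a round `k`-sphere if it admits a distance chart
onto the unit sphere `S^k ⊂ ℝ^{k+1}`. -/
def IsRoundSphereB (S : Set (IdealBoundary X)) (k : ℕ) : Prop :=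
  ∃ f : IdealBoundary X → EuclideanSpace ℝ (Fin (k + 1)),
    (∀ p ∈ S, ‖f p‖ = 1) ∧
    (∀ v : EuclideanSpace ℝ (Fin (k + 1)), ‖v‖ = 1 → ∃ p ∈ S, f p = v) ∧
    Set.InjOn f S ∧
    ∀ p ∈ S, ∀ q ∈ S, titsDist p q = ENNReal.ofReal (sd (f p) (f q))

/-- A round sphere of the Tits boundary is top-dimensional if no round sphere of larger
dimension exists. -/
def IsTopDimSphere (S : Set (IdealBoundary X)) (k : ℕ) : Prop :=
  IsRoundSphereB S k ∧ ∀ (S' : Set (IdealBoundary X)) (m : ℕ), IsRoundSphereB S' m → m ≤ k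

/-- A subset `H` of the Tits boundary is a round `k`-hemisphere with boundary sphere
`bd` if it admits a distance chart onto a closed hemisphere of `S^k`, carrying `bd`
onto the equator. -/
def IsRoundHemisphereB (H : Set (IdealBoundary X)) (k : ℕ) (bd : Set (IdealBoundary X)) :
    Prop :=
  ∃ f : IdealBoundary X → EuclideanSpace ℝ (Fin (k + 1)),
    (∀ p ∈ H, ‖f p‖ = 1 ∧ 0 ≤ f p (Fin.last k)) ∧
    (∀ v : EuclideanSpace ℝ (Fin (k + 1)), ‖v‖ = 1 → 0 ≤ v (Fin.last k) →
      ∃ p ∈ H, f p = v) ∧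
    Set.InjOn f H ∧
    (∀ p ∈ H, ∀ q ∈ H, titsDist p q = ENNReal.ofReal (sd (f p) (f q))) ∧
    bd = {p ∈ H | f p (Fin.last k) = 0}


/-- `σ` is a *singular sphere* (of dimension `m`) in the round sphere `σ̂ ⊂ ∂_T X`:
there is a round hemisphere `τ⁺ ⊂ ∂_T X` with `∂τ⁺ = σ` and `τ⁺ ∩ σ̂ = σ` such that
`τ⁺ ∪ τ⁻` is a round sphere for every round hemisphere `τ⁻ ⊂ σ̂` with `∂τ⁻ = σ`. -/
def IsSingularSphereIn {X : Type*} [MetricSpace X]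
    (σ σhat : Set (IdealBoundary X)) (m : ℕ) : Prop :=
  IsRoundSphereB σ m ∧ σ ⊆ σhat ∧
    ∃ τp : Set (IdealBoundary X), IsRoundHemisphereB τp (m + 1) σ ∧ τp ∩ σhat = σ ∧
      ∀ τm ⊆ σhat, IsRoundHemisphereB τm (m + 1) σ → IsRoundSphereB (τp ∪ τm) (m + 1)

/-!
Let `p ∈ σ̂` and let `q` be its mirror image. Since `σ` is a great subsphere of `σ̂`, there are
hemispheres `τ⁻, τ'⁻ ⊆ σ̂` with boundary `σ` containing `p` and `q`. In the round sphere
`τ⁺ ∪ τ⁻` the antipode `z` of `p` lies in `τ⁺ \ σ`, and in `τ⁺ ∪ τ'⁻` the antipode `y` of `z`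
lies in `τ'⁻`. Passing to an antipode replaces the distance `d` to a point of `σ` by `π - d`,
so `y` has the same distances to `σ` as `p`, hence as `q`; a point of a hemisphere is determined
by its distances to the boundary, so `y = q`. Antipodes lie in the same (symmetric) fiber of
`δ`, whence `δ q = δ y = δ z = δ p`.
-/

section InnerProductSpace

variable {E : Type*} [NormedAddCommGroup E] [InnerProductSpace ℝ E]

theorem Orthonormal.snoc {n : ℕ} {b : Fin n → E} (hb : Orthonormal ℝ b) {w : E}
    (hw : ‖w‖ = 1) (hwb : ∀ i, ⟪b i, w⟫ = 0) :
    Orthonormal ℝ (Fin.snoc b w : Fin (n + 1) → E) := by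
  classical
  have hbw : ∀ i, ⟪w, b i⟫ = 0 := fun i => by rw [real_inner_comm, hwb]
  rw [orthonormal_iff_ite] at hb ⊢
  intro i j
  induction i using Fin.lastCases <;> induction j using Fin.lastCases <;>
    simp [hw, hwb, hbw, hb, Fin.castSucc_ne_last, (Fin.castSucc_ne_last _).symm]

def Orthonormal.linearIsometry {ι : Type*} [Fintype ι] {b : ι → E} (hb : Orthonormal ℝ b) :
    EuclideanSpace ℝ ι →ₗᵢ[ℝ] E :=
  LinearMap.isometryOfInner
    ((Fintype.linearCombination ℝ b).comp (WithLp.linearEquiv 2 ℝ (ι → ℝ)).toLinearMap)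
    fun u v => by simp [Fintype.linearCombination_apply, hb.inner_sum, PiLp.inner_apply, mul_comm]

theorem Orthonormal.linearIsometry_apply {ι : Type*} [Fintype ι] {b : ι → E}
    (hb : Orthonormal ℝ b) (v : EuclideanSpace ℝ ι) : hb.linearIsometry v = ∑ i, v i • b i := by
  simp [Orthonormal.linearIsometry, Fintype.linearCombination_apply]

theorem Orthonormal.linearIsometry_snoc_apply {n : ℕ} {b : Fin n → E} {w : E}
    (hb : Orthonormal ℝ (Fin.snoc b w : Fin (n + 1) → E)) (v : EuclideanSpace ℝ (Fin (n + 1))) :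
    hb.linearIsometry v = ∑ i, v i.castSucc • b i + v (Fin.last n) • w := by
  simp [hb.linearIsometry_apply, Fin.sum_univ_castSucc]

theorem exists_eq_add_smul_of_mem_orthogonal (U : Submodule ℝ E) [U.HasOrthogonalProjection]
    {w₀ : E} (hw₀ : ‖w₀‖ = 1) (hw₀U : w₀ ∈ Uᗮ) (x : E) :
    ∃ u ∈ U, ∃ w ∈ Uᗮ, ‖w‖ = 1 ∧ ∃ s : ℝ, 0 ≤ s ∧ x = u + s • w := by
  set c := x - U.starProjection x
  have hc : c ∈ Uᗮ := U.sub_starProjection_mem_orthogonal x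
  have hx : x = U.starProjection x + c := (add_sub_cancel _ _).symm
  by_cases hc0 : c = 0
  · refine ⟨_, U.starProjection_apply_mem x, w₀, hw₀U, hw₀, 0, le_rfl, ?_⟩
    rw [zero_smul, add_zero]
    exact sub_eq_zero.mp hc0
  · refine ⟨_, U.starProjection_apply_mem x, ‖c‖⁻¹ • c, Uᗮ.smul_mem _ hc,
      norm_smul_inv_norm hc0, ‖c‖, norm_nonneg _, ?_⟩
    rwa [smul_inv_smul₀ (norm_ne_zero_iff.mpr hc0)]

theorem Submodule.exists_norm_eq_one_mem_orthogonal [FiniteDimensional ℝ E] (W : Submodule ℝ E)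
    (hW : Module.finrank ℝ W < Module.finrank ℝ E) : ∃ w ∈ Wᗮ, ‖w‖ = 1 := by
  have hW' : Wᗮ ≠ ⊥ := by
    intro h
    have := W.finrank_add_finrank_orthogonal
    rw [h, finrank_bot] at this
    omega
  obtain ⟨w, hw, hw0⟩ := Submodule.exists_mem_ne_zero_of_ne_bot hW'
  exact ⟨‖w‖⁻¹ • w, Wᗮ.smul_mem _ hw, norm_smul_inv_norm hw0⟩

end InnerProductSpace

section SphericalDistance

variable {n : ℕ} {a b : EuclideanSpace ℝ (Fin n)}

theorem sd_neg_right (a b : EuclideanSpace ℝ (Fin n)) : sd a (-b) = π - sd a b := by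
  rw [sd, sd, inner_neg_right, Real.arccos_neg]

theorem sd_neg_self (ha : ‖a‖ = 1) : sd a (-a) = π := by
  unfold sd
  rw [inner_neg_right, real_inner_self_eq_norm_sq, ha]
  norm_num

theorem sd_map {n' : ℕ} (L : EuclideanSpace ℝ (Fin n) →ₗᵢ[ℝ] EuclideanSpace ℝ (Fin n'))
    (a b : EuclideanSpace ℝ (Fin n)) : sd (L a) (L b) = sd a b := by
  unfold sd
  rw [L.inner_map_map]

theorem sd_nonneg (a b : EuclideanSpace ℝ (Fin n)) : 0 ≤ sd a b := Real.arccos_nonneg _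

theorem sd_le_pi (a b : EuclideanSpace ℝ (Fin n)) : sd a b ≤ π := Real.arccos_le_pi _

theorem inner_eq_inner_of_ofReal_sd_eq {n' : ℕ} {a' b' : EuclideanSpace ℝ (Fin n')}
    (ha : ‖a‖ = 1) (hb : ‖b‖ = 1) (ha' : ‖a'‖ = 1) (hb' : ‖b'‖ = 1)
    (h : ENNReal.ofReal (sd a b) = ENNReal.ofReal (sd a' b')) : ⟪a, b⟫ = ⟪a', b'⟫ := by
  have hab := abs_le.mp ((abs_real_inner_le_norm a b).trans_eq (by rw [ha, hb, one_mul]))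
  have hab' := abs_le.mp ((abs_real_inner_le_norm a' b').trans_eq (by rw [ha', hb', one_mul]))
  have := congrArg Real.cos
    ((ENNReal.ofReal_eq_ofReal_iff (Real.arccos_nonneg _) (Real.arccos_nonneg _)).mp h)
  rwa [Real.cos_arccos hab.1 hab.2, Real.cos_arccos hab'.1 hab'.2] at this

theorem eq_neg_of_ofReal_sd_eq_pi (ha : ‖a‖ = 1) (hb : ‖b‖ = 1)
    (h : ENNReal.ofReal (sd a b) = ENNReal.ofReal π) : b = -a := by
  rw [← sd_neg_self ha] at h
  have := inner_eq_inner_of_ofReal_sd_eq ha hb ha (by rwa [norm_neg]) h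
  rw [inner_neg_right, real_inner_self_eq_norm_sq, ha, one_pow] at this
  exact neg_eq_iff_eq_neg.mp ((inner_eq_neg_one_iff_of_norm_eq_one ha hb).mp this).symm

theorem EuclideanSpace.eq_of_forall_castSucc_eq {u v : EuclideanSpace ℝ (Fin (n + 1))}
    (hu : ‖u‖ = 1) (hv : ‖v‖ = 1)
    (hu_last : 0 ≤ u (Fin.last n)) (hv_last : 0 ≤ v (Fin.last n))
    (h : ∀ i : Fin n, u i.castSucc = v i.castSucc) : u = v := by
  have norm_sq : ∀ w : EuclideanSpace ℝ (Fin (n + 1)),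
      ‖w‖ ^ 2 = ∑ i : Fin n, w i.castSucc ^ 2 + w (Fin.last n) ^ 2 := fun w => by
    simp [EuclideanSpace.norm_sq_eq, Fin.sum_univ_castSucc]
  have h_last : u (Fin.last n) = v (Fin.last n) := by
    have hsq := (norm_sq u).symm.trans (hu.trans hv.symm ▸ norm_sq v)
    simp only [h] at hsq
    exact (pow_left_inj₀ hu_last hv_last two_ne_zero).mp (add_left_cancel hsq)
  ext j
  exact Fin.lastCases h_last h j

end SphericalDistance

theorem IsRoundSphereB.exists_antipode {S : Set (IdealBoundary X)} {n : ℕ}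
    (hS : IsRoundSphereB S n) {p : IdealBoundary X} (hp : p ∈ S) :
    ∃ z ∈ S, titsDist p z = ENNReal.ofReal π ∧
      ∀ t ∈ S, titsDist t p + titsDist t z = ENNReal.ofReal π := by
  obtain ⟨g, hg1, hg2, -, hg4⟩ := hS
  obtain ⟨z, hz, hgz⟩ := hg2 (-g p) (by rw [norm_neg, hg1 p hp])
  refine ⟨z, hz, by rw [hg4 p hp z hz, hgz, sd_neg_self (hg1 p hp)], fun t ht => ?_⟩
  rw [hg4 t ht p hp, hg4 t ht z hz, hgz, sd_neg_right, ← ENNReal.ofReal_add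
    (sd_nonneg _ _) (sub_nonneg.mpr (sd_le_pi _ _)), add_sub_cancel]

namespace IsRoundHemisphereB

variable {H bd : Set (IdealBoundary X)} {n : ℕ}

theorem boundary_subset (hH : IsRoundHemisphereB H n bd) : bd ⊆ H := by
  obtain ⟨F, -, -, -, -, rfl⟩ := hH
  exact fun x hx => hx.1

theorem mem_boundary_of_titsDist_eq_pi (hH : IsRoundHemisphereB H n bd)
    {x y : IdealBoundary X} (hx : x ∈ H) (hy : y ∈ H)
    (hxy : titsDist x y = ENNReal.ofReal π) : x ∈ bd := by
  obtain ⟨F, hF1, -, -, hF4, rfl⟩ := hH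
  have hFy : F y = -F x :=
    eq_neg_of_ofReal_sd_eq_pi (hF1 x hx).1 (hF1 y hy).1 (by rw [← hF4 x hx y hy, hxy])
  have hy_last := (hF1 y hy).2
  rw [hFy, PiLp.neg_apply] at hy_last
  exact ⟨hx, le_antisymm (neg_nonneg.mp hy_last) (hF1 x hx).2⟩

theorem eq_of_forall_titsDist_eq (hH : IsRoundHemisphereB H n bd)
    {x y : IdealBoundary X} (hx : x ∈ H) (hy : y ∈ H)
    (hxy : ∀ t ∈ bd, titsDist t x = titsDist t y) : x = y := by
  obtain ⟨F, hF1, hF2, hF3, hF4, rfl⟩ := hH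
  refine hF3 hx hy (EuclideanSpace.eq_of_forall_castSucc_eq (hF1 x hx).1 (hF1 y hy).1
    (hF1 x hx).2 (hF1 y hy).2 fun i => ?_)
  obtain ⟨t, ht, hFt⟩ := hF2 (EuclideanSpace.single i.castSucc 1) (by simp)
    (by simp [Fin.castSucc_ne_last])
  have h_dist : titsDist t x = titsDist t y := hxy t ⟨ht, by simp [hFt, Fin.castSucc_ne_last]⟩
  rw [hF4 t ht x hx, hF4 t ht y hy] at h_dist
  have h_inner := inner_eq_inner_of_ofReal_sd_eq (hF1 t ht).1 (hF1 x hx).1 (hF1 t ht).1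
    (hF1 y hy).1 h_dist
  simpa [hFt, EuclideanSpace.inner_single_left] using h_inner

end IsRoundHemisphereB

/-- `IsRoundSphereB S n` unfolds to `∃ f, IsSphereChart S f`. -/
def IsSphereChart (S : Set (IdealBoundary X)) {n : ℕ}
    (f : IdealBoundary X → EuclideanSpace ℝ (Fin (n + 1))) : Prop :=
  (∀ p ∈ S, ‖f p‖ = 1) ∧
    (∀ v : EuclideanSpace ℝ (Fin (n + 1)), ‖v‖ = 1 → ∃ p ∈ S, f p = v) ∧
    Set.InjOn f S ∧
    ∀ p ∈ S, ∀ q ∈ S, titsDist p q = ENNReal.ofReal (sd (f p) (f q))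

namespace IsSphereChart

variable {k m n : ℕ} {σhat σ : Set (IdealBoundary X)}
  {f : IdealBoundary X → EuclideanSpace ℝ (Fin (k + 1))}

theorem isRoundHemisphereB_preimage (hf : IsSphereChart σhat f)
    (L : EuclideanSpace ℝ (Fin (n + 1)) →ₗᵢ[ℝ] EuclideanSpace ℝ (Fin (k + 1))) :
    IsRoundHemisphereB {x ∈ σhat | ∃ v, 0 ≤ v (Fin.last n) ∧ f x = L v} n
      {x ∈ σhat | ∃ v, v (Fin.last n) = 0 ∧ f x = L v} := by
  obtain ⟨hf1, hf2, hf3, hf4⟩ := hf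
  set F := fun x => Function.invFun L (f x)
  have hF : ∀ {x v}, f x = L v → F x = v := fun {x v} hfx => by
    simp only [F, hfx]
    exact Function.leftInverse_invFun L.injective v
  refine ⟨F, ?_, ?_, ?_, ?_, ?_⟩
  · rintro x ⟨hx, v, hv, hfx⟩
    rw [hF hfx]
    exact ⟨by rw [← L.norm_map, ← hfx, hf1 x hx], hv⟩
  · intro v hv hv_last
    obtain ⟨x, hx, hfx⟩ := hf2 (L v) (by rw [L.norm_map, hv])
    exact ⟨x, ⟨hx, v, hv_last, hfx⟩, hF hfx⟩
  · rintro x ⟨hx, v, -, hfx⟩ y ⟨hy, v', -, hfy⟩ hxy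
    exact hf3 hx hy (by rw [hfx, hfy, ← hF hfx, ← hF hfy, hxy])
  · rintro x ⟨hx, v, -, hfx⟩ y ⟨hy, v', -, hfy⟩
    rw [hf4 x hx y hy, hfx, hfy, hF hfx, hF hfy, sd_map]
  · ext x
    constructor
    · rintro ⟨hx, v, hv, hfx⟩
      exact ⟨⟨hx, v, hv.ge, hfx⟩, by rw [hF hfx, hv]⟩
    · rintro ⟨⟨hx, v, -, hfx⟩, hFx⟩
      exact ⟨hx, v, by rwa [hF hfx] at hFx, hfx⟩

theorem exists_orthonormal_eq_sum (hf : IsSphereChart σhat f)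
    {h : IdealBoundary X → EuclideanSpace ℝ (Fin (m + 1))} (hh : IsSphereChart σ h)
    (hσ : σ ⊆ σhat) :
    ∃ b : Fin (m + 1) → EuclideanSpace ℝ (Fin (k + 1)), Orthonormal ℝ b ∧
      ∀ t ∈ σ, f t = ∑ i, h t i • b i := by
  obtain ⟨hf1, -, -, hf4⟩ := hf
  obtain ⟨hh1, hh2, -, hh4⟩ := hh
  have h_inner : ∀ s ∈ σ, ∀ t ∈ σ, ⟪f s, f t⟫ = ⟪h s, h t⟫ := fun s hs t ht =>
    inner_eq_inner_of_ofReal_sd_eq (hf1 s (hσ hs)) (hf1 t (hσ ht)) (hh1 s hs) (hh1 t ht)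
      (by rw [← hf4 s (hσ hs) t (hσ ht), hh4 s hs t ht])
  choose P hP hhP using fun i : Fin (m + 1) => hh2 (EuclideanSpace.single i 1) (by simp)
  have hb : Orthonormal ℝ (f ∘ P) := by
    have he := (EuclideanSpace.basisFun (Fin (m + 1)) ℝ).orthonormal
    rw [orthonormal_iff_ite] at he ⊢
    intro i j
    simpa [h_inner _ (hP i) _ (hP j), hhP] using he i j
  refine ⟨f ∘ P, hb, fun t ht => ?_⟩
  rw [← hb.linearIsometry_apply]
  refine (inner_eq_one_iff_of_norm_eq_one (𝕜 := ℝ) (hf1 t (hσ ht))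
    (by rw [LinearIsometry.norm_map, hh1 t ht])).mp ?_
  have hht : ∑ i, h t i * h t i = 1 := by
    simpa [sq, hh1 t ht] using (EuclideanSpace.real_norm_sq_eq (h t)).symm
  simpa [hb.linearIsometry_apply, inner_sum, real_inner_smul_right, h_inner t ht _ (hP _), hhP,
    EuclideanSpace.inner_single_right] using hht

theorem exists_orthonormal_eq_setOf_mem_span (hf : IsSphereChart σhat f)
    {h : IdealBoundary X → EuclideanSpace ℝ (Fin (m + 1))} (hh : IsSphereChart σ h)
    (hσ : σ ⊆ σhat) :
    ∃ b : Fin (m + 1) → EuclideanSpace ℝ (Fin (k + 1)), Orthonormal ℝ b ∧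
      σ = {x ∈ σhat | f x ∈ Submodule.span ℝ (Set.range b)} := by
  obtain ⟨b, hb, hfb⟩ := hf.exists_orthonormal_eq_sum hh hσ
  refine ⟨b, hb, Set.ext fun x => ⟨fun hx => ⟨hσ hx, ?_⟩, ?_⟩⟩
  · rw [hfb x hx]
    exact (Submodule.mem_span_range_iff_exists_fun ℝ).mpr ⟨_, rfl⟩
  rintro ⟨hx, hxb⟩
  obtain ⟨c, hc⟩ := (Submodule.mem_span_range_iff_exists_fun ℝ).mp hxb
  have hfx : f x = hb.linearIsometry (WithLp.toLp 2 c) := by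
    simpa [hb.linearIsometry_apply] using hc.symm
  obtain ⟨t, ht, htc⟩ := hh.2.1 (WithLp.toLp 2 c)
    (by rw [← hb.linearIsometry.norm_map, ← hfx, hf.1 x hx])
  have htx : t = x := hf.2.2.1 (hσ ht) hx (by rw [hfb t ht, ← hb.linearIsometry_apply, htc, hfx])
  exact htx ▸ ht

theorem exists_isRoundHemisphereB_mem (hf : IsSphereChart σhat f)
    {b : Fin (m + 1) → EuclideanSpace ℝ (Fin (k + 1))} (hb : Orthonormal ℝ b)
    (hσ : σ = {x ∈ σhat | f x ∈ Submodule.span ℝ (Set.range b)})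
    {w₀ : EuclideanSpace ℝ (Fin (k + 1))} (hw₀ : ‖w₀‖ = 1) (hw₀σ : ∀ t ∈ σ, ⟪f t, w₀⟫ = 0)
    {p : IdealBoundary X} (hp : p ∈ σhat) :
    ∃ H ⊆ σhat, IsRoundHemisphereB H (m + 1) σ ∧ p ∈ H := by
  set U := Submodule.span ℝ (Set.range b)
  have hw₀U : w₀ ∈ Uᗮ := by
    refine Submodule.isOrtho_iff_le.mp (Submodule.isOrtho_span.mpr ?_)
      (Submodule.mem_span_singleton_self w₀)
    rintro _ rfl _ ⟨i, rfl⟩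
    obtain ⟨t, ht, hft⟩ := hf.2.1 (b i) (hb.1 i)
    rw [real_inner_comm, ← hft]
    exact hw₀σ t (hσ ▸ ⟨ht, hft ▸ Submodule.subset_span ⟨i, rfl⟩⟩)
  -- When `f p ∈ U`, the pole of the hemisphere is `w₀`.
  obtain ⟨u, hu, w, hwU, hw, s, hs, hfp⟩ :=
    exists_eq_add_smul_of_mem_orthogonal U hw₀ hw₀U (f p)
  have hB := hb.snoc hw fun i => Submodule.inner_right_of_mem_orthogonal
    (Submodule.subset_span (Set.mem_range_self i)) hwU
  have hσB : σ = {x ∈ σhat | ∃ v, v (Fin.last (m + 1)) = 0 ∧ f x = hB.linearIsometry v} := by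
    rw [hσ]
    refine Set.ext fun x => and_congr_right fun _ => ⟨fun hx => ?_, ?_⟩
    · obtain ⟨c, hc⟩ := (Submodule.mem_span_range_iff_exists_fun ℝ).mp hx
      exact ⟨WithLp.toLp 2 (Fin.snoc c 0), by simp,
        by simp [hB.linearIsometry_snoc_apply, hc]⟩
    · rintro ⟨v, hv, hfx⟩
      rw [hfx, hB.linearIsometry_snoc_apply, hv, zero_smul, add_zero]
      exact (Submodule.mem_span_range_iff_exists_fun ℝ).mpr ⟨_, rfl⟩
  refine ⟨{x ∈ σhat | ∃ v, 0 ≤ v (Fin.last (m + 1)) ∧ f x = hB.linearIsometry v},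
    fun x hx => hx.1, hσB ▸ hf.isRoundHemisphereB_preimage hB.linearIsometry, hp, ?_⟩
  obtain ⟨c, rfl⟩ := (Submodule.mem_span_range_iff_exists_fun ℝ).mp hu
  exact ⟨WithLp.toLp 2 (Fin.snoc c s), by simpa using hs,
    by simp [hB.linearIsometry_snoc_apply, hfp]⟩

end IsSphereChart

section Submetry

variable {Δ : Type*} {δ : IdealBoundary X → Δ}

theorem apply_eq_of_titsDist_eq_pi (hδ : ∀ x, SymmetricSet (δ ⁻¹' {x})) {p z : IdealBoundary X}
    (hpz : titsDist p z = ENNReal.ofReal π) : δ z = δ p :=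
  hδ (δ p) p rfl z hpz.ge

theorem apply_eq_of_titsDist_eq_on_boundary (hδ : ∀ x, SymmetricSet (δ ⁻¹' {x}))
    {σ τp H H' : Set (IdealBoundary X)} {n : ℕ} (hτp : IsRoundHemisphereB τp n σ)
    (hH : IsRoundHemisphereB H n σ) (hH' : IsRoundHemisphereB H' n σ)
    (hS : IsRoundSphereB (τp ∪ H) n) (hS' : IsRoundSphereB (τp ∪ H') n)
    {p q : IdealBoundary X} (hp : p ∈ H) (hq : q ∈ H')
    (hpq : ∀ t ∈ σ, titsDist t p = titsDist t q) : δ q = δ p := by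
  by_cases hpσ : p ∈ σ
  · rw [hH'.eq_of_forall_titsDist_eq (hH'.boundary_subset hpσ) hq hpq]
  obtain ⟨z, hzS, hpz, hz⟩ := hS.exists_antipode (Or.inr hp)
  have hzH : z ∉ H := fun hzH => hpσ (hH.mem_boundary_of_titsDist_eq_pi hp hzH hpz)
  have hzτp : z ∈ τp := hzS.resolve_right hzH
  obtain ⟨y, hyS', hzy, hy⟩ := hS'.exists_antipode (Or.inl hzτp)
  have hyτp : y ∉ τp := fun hyτp =>
    hzH (hH.boundary_subset (hτp.mem_boundary_of_titsDist_eq_pi hzτp hyτp hzy))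
  have hyq : y = q := by
    refine hH'.eq_of_forall_titsDist_eq (hyS'.resolve_left hyτp) hq fun t ht => ?_
    have hpz_t := hz t (Or.inr (hH.boundary_subset ht))
    have hzy_t := hy t (Or.inl (hτp.boundary_subset ht))
    have hz_ne_top : titsDist t z ≠ ⊤ :=
      ne_top_of_le_ne_top ENNReal.ofReal_ne_top (le_self_add.trans_eq hzy_t)
    rw [← hpq t ht]
    exact (ENNReal.add_right_inj hz_ne_top).mp (hzy_t.trans (hpz_t.symm.trans (add_comm _ _)))
  rw [← hyq]
  exact (apply_eq_of_titsDist_eq_pi hδ hzy).trans (apply_eq_of_titsDist_eq_pi hδ hpz)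

end Submetry

theorem singular_sphere_is_reflecting_general
    {X : Type*} [MetricSpace X]
    {Δ : Type*} (δ : IdealBoundary X → Δ)
    (hfib : ∀ x : Δ, MinimalClosedSymmetric (δ ⁻¹' {x}))
    (σhat : Set (IdealBoundary X)) (k : ℕ)
    (f : IdealBoundary X → EuclideanSpace ℝ (Fin (k + 1)))
    (hf1 : ∀ p ∈ σhat, ‖f p‖ = 1)
    (hf2 : ∀ v : EuclideanSpace ℝ (Fin (k + 1)), ‖v‖ = 1 → ∃ p ∈ σhat, f p = v)
    (hf3 : Set.InjOn f σhat)
    (hf4 : ∀ p ∈ σhat, ∀ q ∈ σhat, titsDist p q = ENNReal.ofReal (sd (f p) (f q)))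
    (σ : Set (IdealBoundary X)) (m : ℕ) (hsing : IsSingularSphereIn σ σhat m) :
    ∀ W : Submodule ℝ (EuclideanSpace ℝ (Fin (k + 1))), Module.finrank ℝ W = k →
      (∀ p ∈ σ, f p ∈ W) →
      ∀ p ∈ σhat, ∀ q ∈ σhat, f q = (Submodule.reflection W) (f p) → δ q = δ p := by
  intro W hW hWσ p hp q hq hfq
  obtain ⟨⟨h, hh⟩, hσσ, τp, hτp, -, hτpH⟩ := hsing
  have hf : IsSphereChart σhat f := ⟨hf1, hf2, hf3, hf4⟩
  obtain ⟨b, hb, hσb⟩ := hf.exists_orthonormal_eq_setOf_mem_span hh hσσ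
  obtain ⟨w₀, hw₀W, hw₀⟩ := W.exists_norm_eq_one_mem_orthogonal (by simp [hW])
  have hw₀σ : ∀ t ∈ σ, ⟪f t, w₀⟫ = 0 := fun t ht =>
    Submodule.inner_right_of_mem_orthogonal (hWσ t ht) hw₀W
  obtain ⟨H, hHσ, hH, hpH⟩ := hf.exists_isRoundHemisphereB_mem hb hσb hw₀ hw₀σ hp
  obtain ⟨H', hH'σ, hH', hqH'⟩ := hf.exists_isRoundHemisphereB_mem hb hσb hw₀ hw₀σ hq
  refine apply_eq_of_titsDist_eq_on_boundary (fun x => (hfib x).2.2.1) hτp hH hH'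
    (hτpH H hHσ hH) (hτpH H' hH'σ hH') hpH hqH' fun t ht => ?_
  have hft : Submodule.reflection W (f t) = f t :=
    Submodule.reflection_mem_subspace_eq_self (hWσ t ht)
  rw [hf4 t (hσσ ht) p hp, hf4 t (hσσ ht) q hq, hfq, ← hft]
  unfold sd
  rw [LinearIsometryEquiv.inner_map_map, hft]

/-- Let `X` be a cocompact Hadamard space whose ideal boundary contains a nontrivial
closed symmetric subset, with induced submetry `δ : ∂_T X → Δ` (whose fibers are the
minimal closed symmetric sets), and let `σ̂ ⊂ ∂_T X` be a top-dimensional round sphere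
with distance chart `f`.  If `σ ⊂ σ̂` is a singular sphere, then `σ` is a reflecting
sphere for `δ|_{σ̂}`: `δ|_{σ̂}` is invariant under the reflection of `σ̂` along every
hypersphere of `σ̂` containing `σ`. -/
theorem singular_sphere_is_reflecting
    {X : Type*} [MetricSpace X] [CAT0 X] [LocallyCompactSpace X] [CompleteSpace X]
    (hgc : GeodesicallyComplete X) (hcc : CocompactIsom X)
    (hsym : ∃ A : Set (IdealBoundary X), A.Nonempty ∧ A ≠ Set.univ ∧ ConeClosed A ∧
      SymmetricSet A)
    {Δ : Type*} [MetricSpace Δ] (δ : IdealBoundary X → Δ)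
    (hδ : IsTitsSubmetry δ) (hfib : ∀ x : Δ, MinimalClosedSymmetric (δ ⁻¹' {x}))
    (σhat : Set (IdealBoundary X)) (k : ℕ) (htop : IsTopDimSphere σhat k)
    (f : IdealBoundary X → EuclideanSpace ℝ (Fin (k + 1)))
    (hf1 : ∀ p ∈ σhat, ‖f p‖ = 1)
    (hf2 : ∀ v : EuclideanSpace ℝ (Fin (k + 1)), ‖v‖ = 1 → ∃ p ∈ σhat, f p = v)
    (hf3 : Set.InjOn f σhat)
    (hf4 : ∀ p ∈ σhat, ∀ q ∈ σhat, titsDist p q = ENNReal.ofReal (sd (f p) (f q)))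
    (σ : Set (IdealBoundary X)) (m : ℕ) (hsing : IsSingularSphereIn σ σhat m) :
    ∀ W : Submodule ℝ (EuclideanSpace ℝ (Fin (k + 1))), Module.finrank ℝ W = k →
      (∀ p ∈ σ, f p ∈ W) →
      ∀ p ∈ σhat, ∀ q ∈ σhat, f q = (Submodule.reflection W) (f p) → δ q = δ p :=
  singular_sphere_is_reflecting_general δ hfib σhat k f hf1 hf2 hf3 hf4 σ m hsing
end
end

section
/- Let σ, σ' be top-dimensional round spheres in the Tits boundary of a cocompact Hadamard space X with induced submetry δ : ∂_T X → Δ, and let φ be an isometry of σ' with δ|_{σ'} ∘ φ = δ|_{σ'}. If (γ_k) ⊂ Isom(X) is a sequence such that γ_k|_σ converges pointwise to an isometry ψ : σ → σ', then δ|_σ = δ|_σ ∘ (ψ⁻¹ ∘ φ ∘ ψ). -/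
open Real Set Filter Metric
open scoped ENNReal

noncomputable section

variable {X : Type*} [MetricSpace X]

open scoped RealInnerProductSpace

/-- Let `σ, σ'` be top-dimensional round spheres in the Tits boundary of a cocompact
Hadamard space `X` carrying the submetry `δ : ∂_T X → Δ` induced by the minimal closed
symmetric sets (`δ` is `Isom(X)`-equivariant and continuous, `Δ` compact), and let `φ`
be an isometry of `σ'` with `δ|_{σ'} ∘ φ = δ|_{σ'}`.  If `(γ_k) ⊂ Isom(X)` is a
sequence whose restrictions to `σ` converge pointwise to an isometry `ψ : σ → σ'`,
then `δ|_σ = δ|_σ ∘ (ψ⁻¹ ∘ φ ∘ ψ)`. -/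
theorem limit_symmetry_of_restricted_submetry
    {X : Type*} [MetricSpace X] [CAT0 X] [LocallyCompactSpace X] [CompleteSpace X]
    (hgc : GeodesicallyComplete X) (hcc : CocompactIsom X)
    {Δ : Type*} [MetricSpace Δ] [CompactSpace Δ] (δ : IdealBoundary X → Δ)
    (hδ : IsTitsSubmetry δ) (hfib : ∀ x : Δ, MinimalClosedSymmetric (δ ⁻¹' {x}))
    -- equivariance of δ under isometries of X
    (hequiv : ∀ g : X ≃ᵢ X, ∃ gΔ : Δ ≃ᵢ Δ, ∀ ξ, δ (isomBoundary g ξ) = gΔ (δ ξ))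
    -- continuity of δ with respect to the cone topology
    (hcont : ∀ (ξ : ℕ → IdealBoundary X) (η : IdealBoundary X), ConeConvB ξ η →
      Filter.Tendsto (fun k => dist (δ (ξ k)) (δ η)) Filter.atTop (nhds 0))
    (σ σ' : Set (IdealBoundary X)) (k : ℕ)
    (hσ : IsTopDimSphere σ k) (hσ' : IsTopDimSphere σ' k)
    -- φ : isometry of σ' with δ ∘ φ = δ on σ'
    (φ : IdealBoundary X → IdealBoundary X)
    (hφim : φ '' σ' = σ')
    (hφiso : ∀ p ∈ σ', ∀ q ∈ σ', titsDist (φ p) (φ q) = titsDist p q)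
    (hφδ : ∀ p ∈ σ', δ (φ p) = δ p)
    -- ψ : pointwise limit on σ of a sequence of isometries of X, an isometry σ → σ'
    (γ : ℕ → X ≃ᵢ X) (ψ : IdealBoundary X → IdealBoundary X)
    (hψim : ψ '' σ = σ')
    (hψiso : ∀ p ∈ σ, ∀ q ∈ σ, titsDist (ψ p) (ψ q) = titsDist p q)
    (hψlim : ∀ ζ ∈ σ, ConeConvB (fun k => isomBoundary (γ k) ζ) (ψ ζ)) :
    ∀ ξ ∈ σ, ∀ η ∈ σ, ψ η = φ (ψ ξ) → δ η = δ ξ := by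
  intro ξ hξ η hη hψη
  -- choose the induced isometries of Δ
  choose gΔ hgΔ using hequiv
  -- ψ ξ ∈ σ'
  have hψξ : ψ ξ ∈ σ' := hψim ▸ Set.mem_image_of_mem ψ hξ
  -- δ (ψ η) = δ (ψ ξ)
  have hkey : δ (ψ η) = δ (ψ ξ) := by rw [hψη, hφδ _ hψξ]
  -- convergence of δ along the orbit, for ζ ∈ σ
  have hconv : ∀ ζ ∈ σ, Tendsto (fun k => dist (gΔ (γ k) (δ ζ)) (δ (ψ ζ)))
      atTop (nhds 0) := by
    intro ζ hζ
    have := hcont (fun k => isomBoundary (γ k) ζ) (ψ ζ) (hψlim ζ hζ)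
    simpa [hgΔ] using this
  -- the constant distance is bounded by a null sequence
  have hle : ∀ k, dist (δ η) (δ ξ) ≤
      dist (gΔ (γ k) (δ η)) (δ (ψ η)) + dist (gΔ (γ k) (δ ξ)) (δ (ψ ξ)) := by
    intro k
    have h1 : dist (δ η) (δ ξ) = dist (gΔ (γ k) (δ η)) (gΔ (γ k) (δ ξ)) :=
      ((gΔ (γ k)).dist_eq _ _).symm
    calc dist (δ η) (δ ξ) = dist (gΔ (γ k) (δ η)) (gΔ (γ k) (δ ξ)) := h1
      _ ≤ dist (gΔ (γ k) (δ η)) (δ (ψ η)) + dist (δ (ψ η)) (gΔ (γ k) (δ ξ)) :=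
        dist_triangle _ _ _
      _ = dist (gΔ (γ k) (δ η)) (δ (ψ η)) + dist (gΔ (γ k) (δ ξ)) (δ (ψ ξ)) := by
        rw [hkey, dist_comm (δ (ψ ξ)) (gΔ (γ k) (δ ξ))]
  have hsum : Tendsto (fun k => dist (gΔ (γ k) (δ η)) (δ (ψ η)) +
      dist (gΔ (γ k) (δ ξ)) (δ (ψ ξ))) atTop (nhds 0) := by
    simpa using (hconv η hη).add (hconv ξ hξ)
  have h0 : dist (δ η) (δ ξ) ≤ 0 :=
    ge_of_tendsto hsum (Filter.Eventually.of_forall hle)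
  exact dist_le_zero.mp h0
end
end
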